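/- arXiv:2203.02620 — 4 statements merged into one kernel-verified Lean document; each statement's English description precedes it below -/
import Mathlib

section
/- A positive integer n is representable as n = x² + xy + y² + 16z² with x, y, z ∈ Z_2 (the 2-adic integers) if and only if n is not of the form 2 + 4ℓ and not of the form 8 + 16ℓ for a nonnegative integer ℓ. -/
/-!
Reducing modulo `16` kills `16 z²`, and `x² + xy + y²` takes no value `≡ 2 (mod 4)` or `≡ 8 (mod 16)`
in `ℤ/16`. Conversely, by Hensel's lemma every odd `2`-adic integer is `t² + t + 1`, the value of
the form at `(t, 1)`; scaling by `2^k` gives `4^k · odd`. Writing `n = 2^e m` with `m` odd, the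
excluded cases are `e = 1, 3`; for even `e` take `z = 0`, and for odd `e ≥ 5` the number
`n - 16 = 16 · odd` is of the previous kind, so take `z = 1`.
-/

open Polynomial in
theorem PadicInt.exists_sq_add_self_add_one_eq {p : ℕ} [Fact p.Prime] (u : ℤ_[p])
    (h : ‖u - 1‖ < 1) : ∃ t : ℤ_[p], t ^ 2 + t + 1 = u := by
  have hnorm : ‖(X ^ 2 + X + C (1 - u)).aeval (0 : ℤ_[p])‖ <
      ‖(X ^ 2 + X + C (1 - u)).derivative.aeval (0 : ℤ_[p])‖ ^ 2 := by
    simpa [norm_sub_rev] using h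
  obtain ⟨t, ht, -⟩ := hensels_lemma hnorm
  exact ⟨t, by linear_combination (by simpa using ht : t ^ 2 + t + (1 - u) = 0)⟩

theorem exists_sq_add_mul_add_sq_eq_four_pow_mul_odd (k : ℕ) {m : ℕ} (hm : Odd m) :
    ∃ x y : ℤ_[2], x ^ 2 + x * y + y ^ 2 = 4 ^ k * m := by
  obtain ⟨j, rfl⟩ := hm
  obtain ⟨t, ht⟩ := PadicInt.exists_sq_add_self_add_one_eq ((2 * j + 1 : ℕ) : ℤ_[2]) <| by
    rw [PadicInt.norm_lt_one_iff_dvd]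
    exact ⟨j, by push_cast; ring⟩
  refine ⟨2 ^ k * t, 2 ^ k, ?_⟩
  rw [← ht, show (4 : ℤ_[2]) ^ k = (2 ^ k) ^ 2 by rw [← pow_mul, mul_comm, pow_mul]; norm_num]
  ring

theorem sq_add_mul_add_sq_zmod_sixteen (a b : ZMod 16) :
    (a ^ 2 + a * b + b ^ 2).val % 4 ≠ 2 ∧ (a ^ 2 + a * b + b ^ 2).val ≠ 8 := by
  revert a b
  decide

theorem Nat.exists_four_pow_mul_odd_or_sixteen_mul_odd_add_sixteen {n : ℕ} (hn : n ≠ 0)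
    (h2 : n % 4 ≠ 2) (h8 : n % 16 ≠ 8) :
    (∃ k m, Odd m ∧ n = 4 ^ k * m) ∨ ∃ m, Odd m ∧ n = 16 * m + 16 := by
  obtain ⟨e, m, ⟨j, rfl⟩, rfl⟩ := Nat.exists_eq_two_pow_mul_odd hn
  rcases Nat.even_or_odd' e with ⟨k, rfl | rfl⟩
  · exact .inl ⟨k, 2 * j + 1, odd_two_mul_add_one j, by rw [pow_mul]; norm_num⟩
  · rcases k with _ | _ | k
    · omega
    · omega
    · set M := 2 ^ (2 * k) * (2 * j + 1)
      have hM : 0 < M := by positivity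
      refine .inr ⟨2 * M - 1, ⟨M - 1, by omega⟩, ?_⟩
      have : 2 ^ (2 * (k + 1 + 1) + 1) * (2 * j + 1) = 32 * M := by ring
      omega

theorem mod_ne_of_natCast_eq_sq_add_mul_add_sq_add_sixteen_mul_sq {n : ℕ} {x y z : ℤ_[2]}
    (h : (n : ℤ_[2]) = x ^ 2 + x * y + y ^ 2 + 16 * z ^ 2) : n % 4 ≠ 2 ∧ n % 16 ≠ 8 := by
  let φ : ℤ_[2] →+* ZMod 16 := PadicInt.toZModPow 4
  have h16 : (n : ZMod 16) = φ x ^ 2 + φ x * φ y + φ y ^ 2 := by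
    simpa [map_ofNat φ 16, show (16 : ZMod 16) = 0 from rfl] using congrArg φ h
  have hval := congrArg ZMod.val h16
  rw [ZMod.val_natCast] at hval
  obtain ⟨h2, h8⟩ := sq_add_mul_add_sq_zmod_sixteen (φ x) (φ y)
  rw [← hval] at h2 h8
  omega

/-- A positive integer `n` is represented by `x² + xy + y² + 16z²` over `ℤ_2`
iff `n` is not of the form `2 + 4ℓ` nor `8 + 16ℓ`. -/
theorem repr_xx_xy_yy_16zz_over_Z2 (n : ℕ) (hn : 0 < n) :
    (∃ x y z : ℤ_[2], (n : ℤ_[2]) = x ^ 2 + x * y + y ^ 2 + 16 * z ^ 2) ↔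
      (¬ ∃ ℓ : ℕ, n = 2 + 4 * ℓ) ∧ (¬ ∃ ℓ : ℕ, n = 8 + 16 * ℓ) := by
  have hmod4 : (¬ ∃ ℓ : ℕ, n = 2 + 4 * ℓ) ↔ n % 4 ≠ 2 :=
    ⟨fun h h2 => h ⟨n / 4, by omega⟩, by rintro h ⟨ℓ, rfl⟩; omega⟩
  have hmod16 : (¬ ∃ ℓ : ℕ, n = 8 + 16 * ℓ) ↔ n % 16 ≠ 8 :=
    ⟨fun h h8 => h ⟨n / 16, by omega⟩, by rintro h ⟨ℓ, rfl⟩; omega⟩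
  rw [hmod4, hmod16]
  refine ⟨fun ⟨x, y, z, h⟩ => mod_ne_of_natCast_eq_sq_add_mul_add_sq_add_sixteen_mul_sq h,
    fun ⟨h2, h8⟩ => ?_⟩
  rcases Nat.exists_four_pow_mul_odd_or_sixteen_mul_odd_add_sixteen hn.ne' h2 h8 with
    ⟨k, m, hm, rfl⟩ | ⟨m, hm, rfl⟩
  · obtain ⟨x, y, hxy⟩ := exists_sq_add_mul_add_sq_eq_four_pow_mul_odd k hm
    exact ⟨x, y, 0, by push_cast; rw [← hxy]; ring⟩
  · obtain ⟨x, y, hxy⟩ := exists_sq_add_mul_add_sq_eq_four_pow_mul_odd 2 hm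
    exact ⟨x, y, 1, by push_cast; rw [hxy]; ring⟩
end

section
/- A positive integer n is representable as n = x² + 3y² + 9z² with x, y, z ∈ Z_3 (the 3-adic integers) if and only if n is not of the form 2 + 3ℓ and not of the form 9^k(6 + 9ℓ) for nonnegative integers k, ℓ. -/
open PadicInt Polynomial

lemma my_three_ne_zero : (3 : ℤ_[3]) ≠ 0 := by
  have : ((3:ℕ) : ℤ_[3]) ≠ 0 := Nat.cast_ne_zero.mpr (by norm_num)
  simpa using this

lemma dvd3 (x : ℤ_[3]) (h : PadicInt.toZMod x = 0) : ∃ a, x = 3 * a := by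
  have hx : x ∈ RingHom.ker (toZMod : ℤ_[3] →+* ZMod 3) := h
  rw [ker_toZMod, maximalIdeal_eq_span_p, Ideal.mem_span_singleton] at hx
  obtain ⟨a, ha⟩ := hx
  exact ⟨a, by simpa using ha⟩

lemma exists_sq (t : ℤ_[3]) (h : (3 : ℤ_[3]) ∣ (t - 1)) : ∃ x : ℤ_[3], x ^ 2 = t := by
  have h2 : ‖(2 : ℤ_[3])‖ = 1 := by
    refine le_antisymm (PadicInt.norm_le_one _) ?_
    by_contra hlt
    push_neg at hlt
    have : ‖((2:ℤ) : ℤ_[3])‖ < 1 := by simpa using hlt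
    rw [PadicInt.norm_int_lt_one_iff_dvd] at this
    omega
  have h1 : ‖(1 : ℤ_[3]) - t‖ < 1 := by
    rw [PadicInt.norm_lt_one_iff_dvd]
    have : (3 : ℤ_[3]) ∣ (1 - t) := (neg_sub t 1) ▸ dvd_neg.mpr h
    simpa using this
  set F : Polynomial ℤ_[3] := X ^ 2 - C t with hF
  have hev : F.eval 1 = 1 - t := by simp [hF]
  have hdev : F.derivative.eval 1 = 2 := by
    simp [hF, derivative_sub, derivative_X_pow, one_add_one_eq_two]
  have hnorm : ‖F.eval 1‖ < ‖F.derivative.eval 1‖ ^ 2 := by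
    rw [hev, hdev, h2]
    simpa using h1
  obtain ⟨z, hz, -⟩ := hensels_lemma (F := F) (a := 1) hnorm
  refine ⟨z, ?_⟩
  have : z ^ 2 - t = 0 := by simpa [hF] using hz
  exact sub_eq_zero.mp this

lemma zmod9_Q2 : ∀ A B C : ZMod (3^2), A ^ 2 + B ^ 2 + 3 * C ^ 2 ≠ 6 := by decide
lemma zmod9_Q1 : ∀ A B : ZMod (3^2), A ^ 2 + 3 * B ^ 2 ≠ 6 := by decide
lemma zmod3_two_sq : ∀ A B : ZMod 3, A ^ 2 + B ^ 2 = 0 → A = 0 ∧ B = 0 := by decide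
lemma zmod3_sq : ∀ A : ZMod 3, A ^ 2 ≠ 2 := by decide
lemma zmod3_sq_zero : ∀ A : ZMod 3, A ^ 2 = 0 → A = 0 := by decide

/-- `x² + y² + 3z²` does not represent `9^k(6+9ℓ)` over `ℤ_3`. -/
lemma Q2_not : ∀ k ℓ : ℕ, ∀ a b c : ℤ_[3],
    ((9 ^ k * (6 + 9 * ℓ) : ℕ) : ℤ_[3]) = a ^ 2 + b ^ 2 + 3 * c ^ 2 → False := by
  intro k
  induction k with
  | zero =>
    intro ℓ a b c e
    have e9 := congrArg (PadicInt.toZModPow 2) e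
    simp only [map_add, map_mul, map_pow, map_natCast, map_ofNat] at e9
    push_cast at e9
    have h9 : (9 : ZMod (3^2)) = 0 := by decide
    rw [h9] at e9
    simp only [one_mul, zero_mul, add_zero, mul_zero] at e9
    exact zmod9_Q2 _ _ _ e9.symm
  | succ k IH =>
    intro ℓ a b c e
    have h3 : (3 : ZMod 3) = 0 := by decide
    have h9 : (9 : ZMod 3) = 0 := by decide
    have e3 := congrArg (PadicInt.toZMod) e
    simp only [map_add, map_mul, map_pow, map_natCast, map_ofNat] at e3
    push_cast at e3
    rw [h3, h9, zero_pow (Nat.succ_ne_zero k)] at e3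
    simp only [zero_mul, add_zero, mul_zero, zero_add] at e3
    obtain ⟨hA, hB⟩ := zmod3_two_sq _ _ e3.symm
    obtain ⟨a', ha⟩ := dvd3 a hA
    obtain ⟨b', hb⟩ := dvd3 b hB
    subst ha hb
    have e' : (3:ℤ_[3]) * ((3:ℤ_[3]) * ((9 ^ k * (6 + 9 * ℓ) : ℕ) : ℤ_[3]))
        = 3 * (3 * a' ^ 2 + 3 * b' ^ 2 + c ^ 2) := by
      push_cast [pow_succ] at e ⊢
      linear_combination e
    have e2 := mul_left_cancel₀ my_three_ne_zero e'
    have e3b := congrArg (PadicInt.toZMod) e2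
    simp only [map_add, map_mul, map_pow, map_natCast, map_ofNat] at e3b
    rw [h3] at e3b
    simp only [zero_mul, zero_add, mul_zero] at e3b
    have hC := zmod3_sq_zero _ e3b.symm
    obtain ⟨c', hc⟩ := dvd3 c hC
    subst hc
    have e'' : (3:ℤ_[3]) * (((9 ^ k * (6 + 9 * ℓ) : ℕ) : ℤ_[3]))
        = 3 * (a' ^ 2 + b' ^ 2 + 3 * c' ^ 2) := by
      linear_combination e2
    exact IH ℓ a' b' c' (mul_left_cancel₀ my_three_ne_zero e'')

/-- `x² + 3y² + 9z²` does not represent `9^k(6+9ℓ)` over `ℤ_3`. -/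
lemma Q1_not : ∀ k ℓ : ℕ, ∀ x y z : ℤ_[3],
    ((9 ^ k * (6 + 9 * ℓ) : ℕ) : ℤ_[3]) = x ^ 2 + 3 * y ^ 2 + 9 * z ^ 2 → False := by
  intro k ℓ x y z e
  cases k with
  | zero =>
    have e9 := congrArg (PadicInt.toZModPow 2) e
    simp only [map_add, map_mul, map_pow, map_natCast, map_ofNat] at e9
    push_cast at e9
    have h9 : (9 : ZMod (3^2)) = 0 := by decide
    rw [h9] at e9
    simp only [one_mul, zero_mul, add_zero, mul_zero] at e9
    exact zmod9_Q1 _ _ e9.symm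
  | succ k =>
    have h3 : (3 : ZMod 3) = 0 := by decide
    have h9 : (9 : ZMod 3) = 0 := by decide
    have e3 := congrArg (PadicInt.toZMod) e
    simp only [map_add, map_mul, map_pow, map_natCast, map_ofNat] at e3
    push_cast at e3
    rw [h3, h9, zero_pow (Nat.succ_ne_zero k)] at e3
    simp only [zero_mul, add_zero, mul_zero, zero_add] at e3
    have hX := zmod3_sq_zero _ e3.symm
    obtain ⟨a, ha⟩ := dvd3 x hX
    subst ha
    have e' : (3:ℤ_[3]) * ((3:ℤ_[3]) * ((9 ^ k * (6 + 9 * ℓ) : ℕ) : ℤ_[3]))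
        = 3 * (3 * a ^ 2 + y ^ 2 + 3 * z ^ 2) := by
      push_cast [pow_succ] at e ⊢
      linear_combination e
    have e2 := mul_left_cancel₀ my_three_ne_zero e'
    have e3b := congrArg (PadicInt.toZMod) e2
    simp only [map_add, map_mul, map_pow, map_natCast, map_ofNat] at e3b
    rw [h3] at e3b
    simp only [zero_mul, zero_add, mul_zero, add_zero] at e3b
    have hY := zmod3_sq_zero _ e3b.symm
    obtain ⟨b, hb⟩ := dvd3 y hY
    subst hb
    have e'' : (3:ℤ_[3]) * (((9 ^ k * (6 + 9 * ℓ) : ℕ) : ℤ_[3]))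
        = 3 * (a ^ 2 + z ^ 2 + 3 * b ^ 2) := by
      linear_combination e2
    exact Q2_not k ℓ a z b (mul_left_cancel₀ my_three_ne_zero e'')

/-- Existence for the form `x² + y² + 3z²`. -/
lemma Q2_exists : ∀ m : ℕ, 0 < m → (¬ ∃ k ℓ : ℕ, m = 9 ^ k * (6 + 9 * ℓ)) →
    ∃ a b c : ℤ_[3], (m : ℤ_[3]) = a ^ 2 + b ^ 2 + 3 * c ^ 2 := by
  intro m
  induction m using Nat.strong_induction_on with
  | _ m IH =>
    intro hm hforb
    by_cases h1 : m % 3 = 1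
    · obtain ⟨q, hq⟩ : ∃ q, m = 3*q+1 := ⟨m/3, by omega⟩
      obtain ⟨x, hx⟩ := exists_sq (m : ℤ_[3]) ⟨(q:ℤ_[3]), by rw [hq]; push_cast; ring⟩
      exact ⟨x, 0, 0, by rw [← hx]; ring⟩
    by_cases h2 : m % 3 = 2
    · obtain ⟨q, hq⟩ : ∃ q, m = 3*q+2 := ⟨m/3, by omega⟩
      obtain ⟨x, hx⟩ := exists_sq ((m:ℤ_[3]) - 1) ⟨(q:ℤ_[3]), by rw [hq]; push_cast; ring⟩
      exact ⟨1, x, 0, by linear_combination -hx⟩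
    by_cases h3 : m % 9 = 3
    · obtain ⟨q, hq⟩ : ∃ q, m = 9*q+3 := ⟨m/9, by omega⟩
      obtain ⟨x, hx⟩ := exists_sq ((3*q+1 : ℕ) : ℤ_[3]) ⟨(q:ℤ_[3]), by push_cast; ring⟩
      have hx' : x ^ 2 = 3*(q:ℤ_[3])+1 := by rw [hx]; push_cast; ring
      refine ⟨0, 0, x, ?_⟩
      rw [show m = 3*(3*q+1) by omega]
      push_cast
      linear_combination -3*hx'
    by_cases h6 : m % 9 = 6
    · exact absurd ⟨0, m/9, by rw [pow_zero, one_mul]; omega⟩ hforb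
    · obtain ⟨s, hs⟩ : ∃ s, m = 9*s := ⟨m/9, by omega⟩
      have hsforb : ¬ ∃ k ℓ : ℕ, s = 9^k*(6+9*ℓ) := by
        rintro ⟨k, ℓ, rfl⟩
        exact hforb ⟨k+1, ℓ, by rw [hs]; ring⟩
      obtain ⟨a, b, c, h⟩ := IH s (by omega) (by omega) hsforb
      exact ⟨3*a, 3*b, 3*c, by rw [hs]; push_cast; linear_combination 9*h⟩

/-- A positive integer `n` is represented by `x² + 3y² + 9z²` over `ℤ_3` iff `n` is
not of the form `2 + 3ℓ` nor of the form `9^k(6 + 9ℓ)`. -/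
theorem repr_xx_3yy_9zz_over_Z3 (n : ℕ) (hn : 0 < n) :
    (∃ x y z : ℤ_[3], (n : ℤ_[3]) = x ^ 2 + 3 * y ^ 2 + 9 * z ^ 2) ↔
      (¬ ∃ ℓ : ℕ, n = 2 + 3 * ℓ) ∧ (¬ ∃ k ℓ : ℕ, n = 9 ^ k * (6 + 9 * ℓ)) := by
  constructor
  · rintro ⟨x, y, z, e⟩
    constructor
    · rintro ⟨ℓ, rfl⟩
      have h3 : (3 : ZMod 3) = 0 := by decide
      have h9 : (9 : ZMod 3) = 0 := by decide
      have e3 := congrArg (PadicInt.toZMod) e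
      simp only [map_add, map_mul, map_pow, map_natCast, map_ofNat] at e3
      push_cast at e3
      rw [h3, h9] at e3
      simp only [zero_mul, add_zero, mul_zero] at e3
      exact zmod3_sq _ e3.symm
    · rintro ⟨k, ℓ, rfl⟩
      exact Q1_not k ℓ x y z e
  · rintro ⟨h2, h69⟩
    by_cases h1 : n % 3 = 1
    · obtain ⟨q, hq⟩ : ∃ q, n = 3*q+1 := ⟨n/3, by omega⟩
      obtain ⟨x, hx⟩ := exists_sq (n : ℤ_[3]) ⟨(q:ℤ_[3]), by rw [hq]; push_cast; ring⟩
      exact ⟨x, 0, 0, by rw [← hx]; ring⟩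
    by_cases hm2 : n % 3 = 2
    · exact absurd ⟨n/3, by omega⟩ h2
    by_cases h3 : n % 9 = 3
    · obtain ⟨q, hq⟩ : ∃ q, n = 9*q+3 := ⟨n/9, by omega⟩
      obtain ⟨y, hy⟩ := exists_sq ((3*q+1 : ℕ) : ℤ_[3]) ⟨(q:ℤ_[3]), by push_cast; ring⟩
      have hy' : y ^ 2 = 3*(q:ℤ_[3])+1 := by rw [hy]; push_cast; ring
      refine ⟨0, y, 0, ?_⟩
      rw [show n = 3*(3*q+1) by omega]
      push_cast
      linear_combination -3*hy'
    by_cases h6 : n % 9 = 6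
    · exact absurd ⟨0, n/9, by rw [pow_zero, one_mul]; omega⟩ h69
    · obtain ⟨s, hs⟩ : ∃ s, n = 9*s := ⟨n/9, by omega⟩
      have hsforb : ¬ ∃ k ℓ : ℕ, s = 9^k*(6+9*ℓ) := by
        rintro ⟨k, ℓ, rfl⟩
        exact h69 ⟨k+1, ℓ, by rw [hs]; ring⟩
      obtain ⟨a, b, c, h⟩ := Q2_exists s (by omega) hsforb
      exact ⟨3*a, 3*c, b, by rw [hs]; push_cast; linear_combination 9*h⟩
end

section
/- A positive integer n with n = 3^t · n₀ where gcd(n₀, 3) = 1, is representable as x² + 3y² + 9z² over Z_3 whenever t ≥ 2 is even, or t is odd and n₀ ≡ 1 (mod 3), or t = 0 and n₀ ≡ 1 (mod 3). -/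
/-- A natural number congruent to 1 mod 3 is a square in `ℤ_[3]`. -/
lemma sq_of_one_mod_three (m : ℕ) (hm : m % 3 = 1) :
    ∃ a : ℤ_[3], a ^ 2 = (m : ℤ_[3]) := by
  set F : Polynomial ℤ_[3] := Polynomial.X ^ 2 - Polynomial.C (m : ℤ_[3]) with hF
  have hderiv : F.derivative = 2 * Polynomial.X := by
    simp [hF]
    exact one_add_one_eq_two
  have heval1 : F.eval 1 = ((1 - (m : ℤ) : ℤ) : ℤ_[3]) := by
    simp [hF]
  have hdval : F.derivative.eval 1 = (2 : ℤ_[3]) := by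
    simp [hderiv]
  have hnorm2 : ‖(2 : ℤ_[3])‖ = 1 := by
    have := (PadicInt.norm_int_lt_one_iff_dvd (p := 3) 2)
    have h2 : ¬ ((3:ℤ) ∣ 2) := by decide
    have hle : ‖((2:ℤ) : ℤ_[3])‖ ≤ 1 := PadicInt.norm_le_one _
    have : ¬ ‖((2:ℤ) : ℤ_[3])‖ < 1 := by
      rw [this]; exact h2
    push_cast at hle this ⊢
    linarith [lt_or_eq_of_le hle]
  have hlt : ‖F.eval 1‖ < ‖F.derivative.eval 1‖ ^ 2 := by
    rw [heval1, hdval, hnorm2, one_pow]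
    rw [PadicInt.norm_int_lt_one_iff_dvd]
    omega
  obtain ⟨z, hz, -⟩ := hensels_lemma (p := 3) hlt
  refine ⟨z, ?_⟩
  have : z ^ 2 - (m : ℤ_[3]) = 0 := by simpa [hF] using hz
  exact sub_eq_zero.mp this
  
/-- If `n = 3^t·n₀` with `gcd(n₀,3) = 1`, then `n` is represented by
`x² + 3y² + 9z²` over `ℤ_3` whenever `t ≥ 2` is even, or `t` is odd and
`n₀ ≡ 1 (mod 3)`, or `t = 0` and `n₀ ≡ 1 (mod 3)`. -/
theorem repr_sufficient_over_Z3 (n t n₀ : ℕ) (hn : 0 < n)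
    (hfac : n = 3 ^ t * n₀) (hcop : Nat.gcd n₀ 3 = 1)
    (hcase : (2 ≤ t ∧ Even t) ∨ (Odd t ∧ n₀ % 3 = 1) ∨ (t = 0 ∧ n₀ % 3 = 1)) :
    ∃ x y z : ℤ_[3], (n : ℤ_[3]) = x ^ 2 + 3 * y ^ 2 + 9 * z ^ 2 := by
  have h3 : ¬ 3 ∣ n₀ := by
    intro h
    have := Nat.dvd_gcd h (dvd_refl 3)
    rw [hcop] at this
    omega
  have hn₀ : n₀ % 3 = 1 ∨ n₀ % 3 = 2 := by omega
  rcases hcase with ⟨ht2, ⟨k, hk⟩⟩ | ⟨⟨k, hk⟩, h1⟩ | ⟨ht0, h1⟩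
  · -- t even, t ≥ 2
    rcases hn₀ with h1 | h2
    · obtain ⟨a, ha⟩ := sq_of_one_mod_three n₀ h1
      refine ⟨3 ^ k * a, 0, 0, ?_⟩
      have : t = 2 * k := by omega
      subst this hfac
      push_cast
      rw [mul_pow, ← ha, ← pow_mul]
      ring
    · -- n₀ ≡ 2: n₀ = 1 + c²
      have h1' : (n₀ - 1) % 3 = 1 := by omega
      obtain ⟨c, hc⟩ := sq_of_one_mod_three (n₀ - 1) h1'
      have hcast : ((n₀ - 1 : ℕ) : ℤ_[3]) = (n₀ : ℤ_[3]) - 1 := by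
        have : 1 ≤ n₀ := by omega
        push_cast [this]; ring
      have hn₀eq : (n₀ : ℤ_[3]) = 1 + c ^ 2 := by
        rw [hc, hcast]; ring
      refine ⟨3 ^ k, 0, 3 ^ (k - 1) * c, ?_⟩
      obtain ⟨j, rfl⟩ : ∃ j, k = j + 1 := ⟨k - 1, by omega⟩
      have ht : t = 2 * (j + 1) := by omega
      subst ht hfac
      push_cast
      rw [hn₀eq]
      ring
  · -- t odd, n₀ ≡ 1
    obtain ⟨a, ha⟩ := sq_of_one_mod_three n₀ h1
    refine ⟨0, 3 ^ k * a, 0, ?_⟩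
    subst hk hfac
    push_cast
    rw [mul_pow, ← ha, ← pow_mul]
    ring
  · -- t = 0
    obtain ⟨a, ha⟩ := sq_of_one_mod_three n₀ h1
    refine ⟨a, 0, 0, ?_⟩
    subst ht0 hfac
    push_cast
    rw [← ha]; ring
end

section
/- The form 4x² + 9y² + 9z² + 4xy + 4xz + 2yz (over the integers) fails to represent every odd perfect square m² all of whose prime factors p satisfy p ≡ 1 (mod 4); in particular it does not represent 1, 25, 169, or 625. -/
/-!
With `w = 2x + y + z` the form is `w² + 8(y² + z²)`. If it equals `m²` with `m` odd, then `w`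
is odd, hence so is `t = y² + z²`, and `m² - w² = 8t` gives `m = a + b` with `ab = 2t`; as `m`
is odd, `m = 2c + d` with `cd = t` odd. A prime `q ≡ 3 (mod 4)` dividing both `c` and `d` would
divide `m`, so by the two-squares theorem `c` and `d` are themselves sums of two squares, and
being odd they are `≡ 1 (mod 4)`. Thus `m ≡ 3 (mod 4)`, whereas `m`, whose prime factors are all
`≡ 1 (mod 4)`, is a sum of two squares and so `m ≡ 1 (mod 4)`.
-/

namespace Nat

theorem mod_four_eq_one_of_odd_of_eq_sq_add_sq {n x y : ℕ} (hn : Odd n)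
    (h : n = x ^ 2 + y ^ 2) : n % 4 = 1 := by
  subst h
  rw [Nat.odd_iff, ← Nat.mod_mod_of_dvd _ (by norm_num : 2 ∣ 4)] at hn
  rw [Nat.add_mod, Nat.pow_mod, Nat.pow_mod y] at hn ⊢
  have hx := Nat.mod_lt x (by norm_num : 4 > 0)
  have hy := Nat.mod_lt y (by norm_num : 4 > 0)
  interval_cases x % 4 <;> interval_cases y % 4 <;> simp_all

theorem odd_of_forall_prime_dvd_mod_four_eq_one {m : ℕ}
    (hm : ∀ p : ℕ, p.Prime → p ∣ m → p % 4 = 1) : Odd m :=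
  Nat.odd_iff.mpr <| by
    by_contra h
    have := hm 2 Nat.prime_two (Nat.dvd_of_mod_eq_zero (by omega))
    omega

theorem exists_sq_add_sq_of_forall_prime_dvd_mod_four_eq_one {m : ℕ}
    (hm : ∀ p : ℕ, p.Prime → p ∣ m → p % 4 = 1) : ∃ x y : ℕ, m = x ^ 2 + y ^ 2 :=
  Nat.eq_sq_add_sq_iff.mpr fun q hq hq3 ↦ by
    have := hm q (Nat.prime_of_mem_primeFactors hq) (Nat.dvd_of_mem_primeFactors hq)
    omega

theorem exists_sq_add_sq_of_mul_eq_sq_add_sq {c d x y : ℕ} (h : c * d = x ^ 2 + y ^ 2)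
    (hcd : ∀ q : ℕ, q.Prime → q % 4 = 3 → q ∣ c → ¬ q ∣ d) : ∃ u v : ℕ, c = u ^ 2 + v ^ 2 := by
  refine Nat.eq_sq_add_sq_iff.mpr fun q hq hq3 ↦ ?_
  obtain ⟨hqp, hqc, hc⟩ := Nat.mem_primeFactors.mp hq
  have hqd := hcd q hqp hq3 hqc
  have hd : d ≠ 0 := by rintro rfl; exact hqd (dvd_zero q)
  have : Fact q.Prime := ⟨hqp⟩
  have hmul := Nat.eq_sq_add_sq_iff.mp ⟨x, y, h⟩ q
    (Nat.mem_primeFactors.mpr ⟨hqp, dvd_mul_of_dvd_left hqc d, mul_ne_zero hc hd⟩) hq3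
  rwa [padicValNat.mul hc hd, padicValNat.eq_zero_of_not_dvd hqd, add_zero] at hmul

theorem not_forall_prime_dvd_two_mul_add_mod_four_eq_one {c d x y : ℕ}
    (h : c * d = x ^ 2 + y ^ 2) (hodd : Odd (c * d)) :
    ¬ ∀ p : ℕ, p.Prime → p ∣ 2 * c + d → p % 4 = 1 := by
  intro hm
  have hcd : ∀ q : ℕ, q.Prime → q % 4 = 3 → q ∣ c → ¬ q ∣ d := fun q hq hq3 hqc hqd ↦ by
    have := hm q hq (dvd_add (dvd_mul_of_dvd_right hqc 2) hqd)
    omega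
  obtain ⟨hc, hd⟩ := Nat.odd_mul.mp hodd
  obtain ⟨u, v, hc_sq⟩ := exists_sq_add_sq_of_mul_eq_sq_add_sq h hcd
  obtain ⟨u', v', hd_sq⟩ := exists_sq_add_sq_of_mul_eq_sq_add_sq (mul_comm c d ▸ h)
    fun q hq hq3 hqd hqc ↦ hcd q hq hq3 hqc hqd
  obtain ⟨r, s, hm_sq⟩ := exists_sq_add_sq_of_forall_prime_dvd_mod_four_eq_one hm
  have h1 := mod_four_eq_one_of_odd_of_eq_sq_add_sq hc hc_sq
  have h2 := mod_four_eq_one_of_odd_of_eq_sq_add_sq hd hd_sq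
  have h3 := mod_four_eq_one_of_odd_of_eq_sq_add_sq ((even_two_mul c).add_odd hd) hm_sq
  omega

theorem exists_two_mul_add_eq_of_sq_eq_sq_add_eight_mul {m w t : ℕ} (hm : Odd m)
    (h : m ^ 2 = w ^ 2 + 8 * t) : ∃ c d, c * d = t ∧ m = 2 * c + d := by
  have hw : Odd w := by
    have : Odd (w ^ 2 + 8 * t) := h ▸ hm.pow
    have : Odd (w ^ 2) := by simpa [parity_simps] using this
    exact (Nat.odd_pow_iff two_ne_zero).mp this
  have hwm : w ≤ m := by nlinarith
  obtain ⟨a, b, hab, hba⟩ : ∃ a b, m = a + b ∧ b = a + w :=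
    ⟨(m - w) / 2, (m + w) / 2, by grind, by grind⟩
  have hprod : a * b = 2 * t := by subst hab hba; nlinarith
  rcases Nat.even_or_odd a with ⟨c, rfl⟩ | ha
  · exact ⟨c, b, by linarith, by omega⟩
  · obtain ⟨c, rfl⟩ : Even b := by
      have : Odd (a + b) := hab ▸ hm
      simpa [parity_simps, ha] using this
    exact ⟨c, a, by linarith, by omega⟩

end Nat

theorem jonesPall_form_eq (x y z : ℤ) :
    4 * x ^ 2 + 9 * y ^ 2 + 9 * z ^ 2 + 4 * x * y + 4 * x * z + 2 * y * z =
      (2 * x + y + z) ^ 2 + 8 * (y ^ 2 + z ^ 2) := by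
  ring

theorem jonesPall_form_ne_sq {m : ℕ} (hp : ∀ p : ℕ, p.Prime → p ∣ m → p % 4 = 1) (x y z : ℤ) :
    (m : ℤ) ^ 2 ≠ 4 * x ^ 2 + 9 * y ^ 2 + 9 * z ^ 2 + 4 * x * y + 4 * x * z + 2 * y * z := by
  rw [jonesPall_form_eq]
  intro h
  have hm := Nat.odd_of_forall_prime_dvd_mod_four_eq_one hp
  have hodd : Odd (y ^ 2 + z ^ 2) := by
    have : Odd ((m : ℤ) ^ 2) := ((Int.odd_coe_nat m).mpr hm).pow
    rw [h] at this
    grind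
  have hcast : ((y.natAbs ^ 2 + z.natAbs ^ 2 : ℕ) : ℤ) = y ^ 2 + z ^ 2 := by
    push_cast [Int.natCast_natAbs, sq_abs]
    rfl
  obtain ⟨c, d, hcd, rfl⟩ := Nat.exists_two_mul_add_eq_of_sq_eq_sq_add_eight_mul hm
    (w := (2 * x + y + z).natAbs) (t := y.natAbs ^ 2 + z.natAbs ^ 2)
    (by zify; simpa only [sq_abs] using h)
  refine Nat.not_forall_prime_dvd_two_mul_add_mod_four_eq_one hcd ?_ hp
  rwa [hcd, ← Int.odd_coe_nat, hcast]

/-- The Jones–Pall form `4x² + 9y² + 9z² + 4xy + 4xz + 2yz` fails to represent every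
odd square `m²` all of whose prime factors are `≡ 1 (mod 4)`; in particular it does
not represent `1, 25, 169, 625`. -/
theorem jones_pall_exceptions :
    (∀ m : ℕ, Odd m → (∀ p : ℕ, p.Prime → p ∣ m → p % 4 = 1) →
      ¬ ∃ x y z : ℤ, (m : ℤ) ^ 2 =
        4 * x ^ 2 + 9 * y ^ 2 + 9 * z ^ 2 + 4 * x * y + 4 * x * z + 2 * y * z) ∧
    (∀ n ∈ ({1, 25, 169, 625} : Set ℤ),
      ¬ ∃ x y z : ℤ, n =
        4 * x ^ 2 + 9 * y ^ 2 + 9 * z ^ 2 + 4 * x * y + 4 * x * z + 2 * y * z) := by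
  refine ⟨fun m _ hp ⟨x, y, z, h⟩ ↦ jonesPall_form_ne_sq hp x y z h, ?_⟩
  rintro n hn ⟨x, y, z, hq⟩
  obtain ⟨m, hm, rfl⟩ : ∃ m ∈ ({1, 5, 13, 25} : Finset ℕ), (m : ℤ) ^ 2 = n := by
    simp only [Set.mem_insert_iff, Set.mem_singleton_iff] at hn
    rcases hn with rfl | rfl | rfl | rfl
    exacts [⟨1, by simp, by norm_num⟩, ⟨5, by simp, by norm_num⟩, ⟨13, by simp, by norm_num⟩,
      ⟨25, by simp, by norm_num⟩]
  refine jonesPall_form_ne_sq (fun p hp hpm ↦ ?_) x y z hq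
  have := Nat.le_of_dvd (by simp at hm; omega) hpm
  simp only [Finset.mem_insert, Finset.mem_singleton] at hm
  rcases hm with rfl | rfl | rfl | rfl <;> interval_cases p <;> norm_num at *
end
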